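/- Let wE, wT, α, β, b, p₀ be positive reals, let c₀, c₁, g₁, g₃, h₁, h₃ be nonnegative reals, and let g₂, h₂ be arbitrary reals. Then the function of (ω̃, f̃ᵤ, f̃ 𝒻, p̃, ρ̃) ∈ ℝ⁵ given by Ξ̃ = wE·b·(e^{p̃ − ω̃} + p₀·e^{−ω̃})/log(1 + β·e^{p̃}) + wE·α·((c₀ + g₃)·e^{2f̃ᵤ} + g₁·e^{2f̃ᵤ + g₂·ω̃}) + wT·( b·e^{−ω̃ − ρ̃}/log(1 + β·e^{p̃}) + (c₀ + g₃)·e^{−f̃ᵤ} + g₁·e^{−f̃ᵤ + g₂·ω̃} + (c₁ + h₃)·e^{−f̃ 𝒻} + h₁·e^{−f̃ 𝒻 + h₂·ω̃} ) is convex on ℝ⁵, where log denotes the natural logarithm. -/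

import Mathlib

/-!
Every summand of `Ξ̃` has the form `c * exp (ℓ v + t * φ p̃)` with `c, t ≥ 0`, `ℓ` linear and
`φ p = -log (log (1 + β * exp p))`, because `1 / log (1 + β * exp p) = exp (φ p)`. The exponential
of a convex function is convex, so it suffices that `φ` is convex: with `u = β * exp p` (so that
`u' = u`) and `L = log (1 + u)`, one finds `φ'' = u * (u - L) / ((1 + u) * L) ^ 2 ≥ 0`, as
`log (1 + u) ≤ u`.
-/

open Real Set

theorem ConvexOn.exp {E : Type*} [AddCommMonoid E] [SMul ℝ E] {s : Set E} {g : E → ℝ}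
    (hg : ConvexOn ℝ s g) : ConvexOn ℝ s fun x => exp (g x) :=
  ⟨hg.1, fun _ hx _ hy _ _ ha hb hab => (exp_le_exp.2 (hg.2 hx hy ha hb hab)).trans
    (convexOn_exp.2 (mem_univ _) (mem_univ _) ha hb hab)⟩

theorem convexOn_neg_log_log_one_add_mul_exp {β : ℝ} (hβ : 0 < β) :
    ConvexOn ℝ univ fun p => -log (log (1 + β * exp p)) := by
  have hu : ∀ p, HasDerivAt (fun p => 1 + β * exp p) (β * exp p) p := fun p => by
    simpa using ((hasDerivAt_exp p).const_mul β).const_add 1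
  have hpos : ∀ p, 0 < 1 + β * exp p := fun p => by positivity
  have hL : ∀ p, 0 < log (1 + β * exp p) := fun p =>
    log_pos (lt_add_of_pos_right 1 (by positivity))
  have hdL : ∀ p, HasDerivAt (fun p => log (1 + β * exp p))
      (β * exp p / (1 + β * exp p)) p := fun p => (hu p).log (hpos p).ne'
  have hdφ : ∀ p, HasDerivAt (fun p => -log (log (1 + β * exp p)))
      (-(β * exp p) / ((1 + β * exp p) * log (1 + β * exp p))) p := fun p => by
    refine ((hdL p).log (hL p).ne').neg.congr_deriv ?_
    field_simp
  have hdφ' : ∀ p, HasDerivAt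
      (fun p => -(β * exp p) / ((1 + β * exp p) * log (1 + β * exp p)))
      (β * exp p * (β * exp p - log (1 + β * exp p)) /
        ((1 + β * exp p) * log (1 + β * exp p)) ^ 2) p := fun p => by
    have hexp := (hasDerivAt_exp p).const_mul β
    refine (hexp.neg.div ((hu p).mul (hdL p)) (mul_pos (hpos p) (hL p)).ne').congr_deriv ?_
    simp only [Pi.mul_apply, Pi.neg_apply]
    field_simp
    ring
  refine convexOn_of_hasDerivWithinAt2_nonneg convex_univ
    (fun p _ => (hdφ p).continuousAt.continuousWithinAt)
    (fun p _ => (hdφ p).hasDerivWithinAt) (fun p _ => (hdφ' p).hasDerivWithinAt)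
    (fun p _ => div_nonneg (mul_nonneg (by positivity) ?_) (sq_nonneg _))
  linarith [log_le_sub_one_of_pos (hpos p)]

theorem convexOn_linear_add_mul_comp_fourth {f : ℝ → ℝ} (hf : ConvexOn ℝ univ f)
    (a₁ a₂ a₃ a₄ a₅ : ℝ) {t : ℝ} (ht : 0 ≤ t) :
    ConvexOn ℝ univ fun v : ℝ × ℝ × ℝ × ℝ × ℝ =>
      a₁ * v.1 + a₂ * v.2.1 + a₃ * v.2.2.1 + a₄ * v.2.2.2.1 + a₅ * v.2.2.2.2 + t * f v.2.2.2.1 := by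
  refine ⟨convex_univ, fun x _ y _ a b ha hb hab => ?_⟩
  have hfxy := hf.2 (mem_univ x.2.2.2.1) (mem_univ y.2.2.2.1) ha hb hab
  simp only [smul_eq_mul, Prod.smul_fst, Prod.smul_snd, Prod.fst_add, Prod.snd_add] at hfxy ⊢
  nlinarith [mul_le_mul_of_nonneg_left hfxy ht]

/-- Proposition 2: after the logarithmic change of variables, the weighted
energy-and-delay cost `Ξ̃` of a user whose task is executed at the fog server
is jointly convex in `(ω̃, f̃ᵤ, f̃𝒻, p̃, ρ̃) ∈ ℝ⁵`. -/
theorem convexOn_transformed_WEDC (wE wT α β b p₀ c₀ c₁ g₁ g₃ h₁ h₃ g₂ h₂ : ℝ)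
    (hwE : 0 < wE) (hwT : 0 < wT) (hα : 0 < α) (hβ : 0 < β) (hb : 0 < b)
    (hp₀ : 0 < p₀) (hc₀ : 0 ≤ c₀) (hc₁ : 0 ≤ c₁) (hg₁ : 0 ≤ g₁) (hg₃ : 0 ≤ g₃)
    (hh₁ : 0 ≤ h₁) (hh₃ : 0 ≤ h₃) :
    ConvexOn ℝ (Set.univ : Set (ℝ × ℝ × ℝ × ℝ × ℝ))
      (fun v : ℝ × ℝ × ℝ × ℝ × ℝ =>
        wE * b * (Real.exp (v.2.2.2.1 - v.1) + p₀ * Real.exp (-v.1)) /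
            Real.log (1 + β * Real.exp v.2.2.2.1) +
          wE * α * ((c₀ + g₃) * Real.exp (2 * v.2.1) +
            g₁ * Real.exp (2 * v.2.1 + g₂ * v.1)) +
          wT * (b * Real.exp (-v.1 - v.2.2.2.2) /
              Real.log (1 + β * Real.exp v.2.2.2.1) +
            (c₀ + g₃) * Real.exp (-v.2.1) + g₁ * Real.exp (-v.2.1 + g₂ * v.1) +
            (c₁ + h₃) * Real.exp (-v.2.2.1) + h₁ * Real.exp (-v.2.2.1 + h₂ * v.1))) := by
  have term := fun (a₁ a₂ a₃ a₄ a₅ : ℝ) {t c : ℝ} (ht : 0 ≤ t) (hc : 0 ≤ c) =>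
    ((convexOn_linear_add_mul_comp_fourth (convexOn_neg_log_log_one_add_mul_exp hβ)
      a₁ a₂ a₃ a₄ a₅ ht).exp).smul hc
  refine ((term (-1) 0 0 1 0 zero_le_one (by positivity : 0 ≤ wE * b)).add
    (term (-1) 0 0 0 0 zero_le_one (by positivity : 0 ≤ wE * b * p₀)) |>.add
    (term 0 2 0 0 0 le_rfl (by positivity : 0 ≤ wE * α * (c₀ + g₃))) |>.add
    (term g₂ 2 0 0 0 le_rfl (by positivity : 0 ≤ wE * α * g₁)) |>.add
    (term (-1) 0 0 0 (-1) zero_le_one (by positivity : 0 ≤ wT * b)) |>.add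
    (term 0 (-1) 0 0 0 le_rfl (by positivity : 0 ≤ wT * (c₀ + g₃))) |>.add
    (term g₂ (-1) 0 0 0 le_rfl (by positivity : 0 ≤ wT * g₁)) |>.add
    (term 0 0 (-1) 0 0 le_rfl (by positivity : 0 ≤ wT * (c₁ + h₃))) |>.add
    (term h₂ 0 (-1) 0 0 le_rfl (by positivity : 0 ≤ wT * h₁))).congr fun v _ => ?_
  have hL : 0 < log (1 + β * exp v.2.2.2.1) := log_pos (lt_add_of_pos_right 1 (by positivity))
  simp only [Pi.add_apply, smul_eq_mul, one_mul, zero_mul, neg_mul, add_zero, zero_add, exp_add,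
    exp_sub, exp_neg, exp_log hL]
  ring
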